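/- For any connected graph G_m of order m ≥ 2 with edge set E(G_m), and complete graph K_n with n ≥ 2, max{rvc(G_m), n+1} ≤ rvcl(G_m ⋄ K_n) ≤ m + n + |E(G_m)| − 1. -/

import Mathlib

open SimpleGraph

/-- A walk is a rainbow vertex path: it is a path and its internal vertices
receive pairwise distinct colors. -/
def IsRainbowPath {V : Type*} (G : SimpleGraph V) {k : ℕ} (c : V → Fin k)
    {u v : V} (p : G.Walk u v) : Prop :=
  p.IsPath ∧ (p.support.tail.dropLast.map c).Nodup

/-- A rainbow vertex coloring: every two vertices are joined by a rainbow vertex path. -/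
def IsRVColoring {V : Type*} (G : SimpleGraph V) {k : ℕ} (c : V → Fin k) : Prop :=
  ∀ u v : V, ∃ p : G.Walk u v, IsRainbowPath G c p

/-- The rainbow vertex connection number. -/
noncomputable def rvc {V : Type*} (G : SimpleGraph V) : ℕ :=
  sInf {k | ∃ c : V → Fin k, IsRVColoring G c}

/-- The rainbow code of a vertex: its vector of distances to the color classes. -/
noncomputable def rainbowCode {V : Type*} (G : SimpleGraph V) {k : ℕ}
    (c : V → Fin k) (v : V) : Fin k → ℕ :=
  fun i => sInf {d | ∃ w, c w = i ∧ G.dist v w = d}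

/-- A locating rainbow coloring: a rainbow vertex coloring whose rainbow codes
are pairwise distinct. -/
def IsLocatingRVColoring {V : Type*} (G : SimpleGraph V) {k : ℕ} (c : V → Fin k) : Prop :=
  IsRVColoring G c ∧ Function.Injective (rainbowCode G c)

/-- The locating rainbow connection number. -/
noncomputable def rvcl {V : Type*} (G : SimpleGraph V) : ℕ :=
  sInf {k | ∃ c : V → Fin k, IsLocatingRVColoring G c}

/-- The edge corona `G ⋄ H`: one copy of `G` together with one copy of `H`
for each edge of `G`, where both endpoints of the edge are joined to
every vertex of the corresponding copy of `H`. -/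
def edgeCorona {V W : Type*} (G : SimpleGraph V) (H : SimpleGraph W) :
    SimpleGraph (V ⊕ (G.edgeSet × W)) where
  Adj x y :=
    match x, y with
    | .inl u, .inl v => G.Adj u v
    | .inl u, .inr (e, _) => u ∈ (e : Sym2 V)
    | .inr (e, _), .inl u => u ∈ (e : Sym2 V)
    | .inr (e, w), .inr (e', w') => e = e' ∧ H.Adj w w'
  symm := by
    refine ⟨?_⟩
    rintro (u | ⟨e, w⟩) (v | ⟨e', w'⟩) h
    · exact h.symm
    · exact h
    · exact h
    · exact ⟨h.1.symm, h.2.symm⟩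
  loopless := by
    refine ⟨?_⟩
    rintro (u | ⟨e, w⟩) h
    · exact G.ne_of_adj h rfl
    · exact H.ne_of_adj h.2 rfl

/-- A cut vertex: a vertex whose removal disconnects the graph. -/
def IsCutVertex {V : Type*} (G : SimpleGraph V) (v : V) : Prop :=
  ¬ (G.induce {u | u ≠ v}).Connected

/-!
For the lower bounds, a rainbow path of `G ⋄ K_n` between two vertices of `G` projects to a
rainbow path of `G`: each detour through the copy over an edge `ab` is replaced by that edge,
which keeps the internal vertices a sublist. The vertices of a copy of `K_n` are adjacent twins,
so the transposition of two of them is an automorphism and a locating colouring must give them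
distinct colours; with exactly `n` colours, an endpoint `u` of the edge would then share its
rainbow code with the copy vertex of its own colour, both seeing every other colour at distance
one.

For the upper bound, give every vertex of `G` and one vertex `w₀` of every copy a private colour
and colour the other copy vertices by their position in `K_n`. Every pair of vertices is joined
by a path whose internal vertices lie in `G`, so the colouring is rainbow. A zero entry of the
rainbow code recovers the colour, and two vertices at the same position of different copies are
separated by their distance to the private vertex of one of the copies.
-/

open List in
theorem List.Sublist.dropLast {α : Type*} {l₁ l₂ : List α} (h : l₁ <+ l₂) :
    l₁.dropLast <+ l₂.dropLast := by
  simpa using h.reverse.tail.reverse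

theorem Fintype.card_sum_sum_subtype_ne {α β γ : Type*} [Fintype α] [Fintype β] [Fintype γ]
    [DecidableEq γ] (c : γ) :
    Fintype.card (α ⊕ β ⊕ {x // x ≠ c}) =
      Fintype.card α + Fintype.card γ + Fintype.card β - 1 := by
  have := Fintype.card_pos_iff.mpr ⟨c⟩
  simp only [Fintype.card_sum, Fintype.card_subtype_compl, Fintype.card_unique]
  omega

namespace SimpleGraph

variable {V : Type*} {G : SimpleGraph V}

theorem Iso.dist_eq {V' : Type*} {G' : SimpleGraph V'} (φ : G ≃g G') (u v : V) :
    G'.dist (φ u) (φ v) = G.dist u v := by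
  by_cases h : G.Reachable u v
  · obtain ⟨p, hp⟩ := h.exists_walk_length_eq_dist
    have h' : G'.Reachable (φ u) (φ v) := Iso.reachable_iff.mpr h
    obtain ⟨p', hp'⟩ := h'.exists_walk_length_eq_dist
    refine le_antisymm ?_ ?_
    · simpa [hp] using dist_le (p.map φ.toHom)
    · simpa [hp'] using
        dist_le ((p'.map φ.symm.toHom).copy (φ.symm_apply_apply u) (φ.symm_apply_apply v))
  · rw [dist_eq_zero_of_not_reachable h,
      dist_eq_zero_of_not_reachable (mt Iso.reachable_iff.mp h)]

def Iso.swapOfTwins [DecidableEq V] {x y : V} (hxy : G.Adj x y)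
    (htwin : ∀ z, z ≠ x → z ≠ y → (G.Adj z x ↔ G.Adj z y)) : G ≃g G where
  toEquiv := Equiv.swap x y
  map_rel_iff' {a b} := by
    simp only [Equiv.swap_apply_def]
    split_ifs <;> subst_vars <;> grind [G.adj_comm, G.irrefl]

theorem Iso.swapOfTwins_apply [DecidableEq V] {x y : V} (hxy : G.Adj x y)
    (htwin : ∀ z, z ≠ x → z ≠ y → (G.Adj z x ↔ G.Adj z y)) (z : V) :
    Iso.swapOfTwins hxy htwin z = Equiv.swap x y z :=
  rfl

end SimpleGraph

section RainbowCode

variable {V : Type*} {G : SimpleGraph V} {k : ℕ} {c : V → Fin k}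

theorem IsRainbowPath.reverse {u v : V} {p : G.Walk u v} (h : IsRainbowPath G c p) : IsRainbowPath G c p.reverse := by
  refine ⟨h.1.reverse, ?_⟩
  simpa [List.tail_dropLast] using h.2

theorem rainbowCode_le_dist {i : Fin k} {z : V} (hz : c z = i) (v : V) :
    rainbowCode G c v i ≤ G.dist v z :=
  Nat.sInf_le ⟨z, hz, rfl⟩

theorem exists_dist_eq_rainbowCode {i : Fin k} (hi : ∃ z, c z = i) (v : V) :
    ∃ w, c w = i ∧ G.dist v w = rainbowCode G c v i :=
  let ⟨z, hz⟩ := hi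
  Nat.sInf_mem (s := {d | ∃ w, c w = i ∧ G.dist v w = d}) ⟨_, z, hz, rfl⟩

theorem rainbowCode_self (v : V) : rainbowCode G c v (c v) = 0 :=
  Nat.le_zero.mp (by simpa using rainbowCode_le_dist (G := G) (rfl : c v = c v) v)

theorem rainbowCode_eq_zero_iff (hG : G.Preconnected) {i : Fin k} (hi : ∃ z, c z = i) (v : V) :
    rainbowCode G c v i = 0 ↔ c v = i := by
  refine ⟨fun h => ?_, fun h => h ▸ rainbowCode_self v⟩
  obtain ⟨w, hw, hd⟩ := exists_dist_eq_rainbowCode (G := G) hi v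
  rwa [(hG v w).dist_eq_zero_iff.mp (hd.trans h)]

theorem color_eq_of_rainbowCode_eq (hG : G.Preconnected) {x y : V}
    (h : rainbowCode G c x = rainbowCode G c y) : c x = c y :=
  ((rainbowCode_eq_zero_iff hG ⟨x, rfl⟩ y).mp (h ▸ rainbowCode_self x)).symm

theorem rainbowCode_iso (φ : G ≃g G) (hc : ∀ z, c (φ z) = c z) (v : V) :
    rainbowCode G c (φ v) = rainbowCode G c v := by
  funext i
  refine congrArg sInf (Set.ext fun d => ⟨?_, ?_⟩)
  · rintro ⟨w, rfl, rfl⟩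
    refine ⟨φ.symm w, ?_, ?_⟩
    · rw [← hc, φ.apply_symm_apply]
    · rw [← φ.dist_eq, φ.apply_symm_apply]
  · rintro ⟨w, rfl, rfl⟩
    exact ⟨φ w, hc w, φ.dist_eq v w⟩

theorem rainbowCode_eq_of_forall_exists_adj (hG : G.Preconnected) {x y : V} (hxy : c x = c y)
    (h : ∀ i ≠ c x, ∃ z, c z = i ∧ G.Adj x z ∧ G.Adj y z) :
    rainbowCode G c x = rainbowCode G c y := by
  funext i
  by_cases hi : i = c x
  · rw [hi, rainbowCode_self, hxy, rainbowCode_self]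
  obtain ⟨z, hz, hxz, hyz⟩ := h i hi
  have hx : rainbowCode G c x i ≠ 0 :=
    (rainbowCode_eq_zero_iff hG ⟨z, hz⟩ x).not.mpr (Ne.symm hi)
  have hy : rainbowCode G c y i ≠ 0 :=
    (rainbowCode_eq_zero_iff hG ⟨z, hz⟩ y).not.mpr (hxy ▸ Ne.symm hi)
  have hx1 := (rainbowCode_le_dist (G := G) hz x).trans (dist_eq_one_iff_adj.mpr hxz).le
  have hy1 := (rainbowCode_le_dist (G := G) hz y).trans (dist_eq_one_iff_adj.mpr hyz).le
  omega

theorem IsRVColoring.preconnected (hc : IsRVColoring G c) : G.Preconnected :=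
  fun u v => (hc u v).elim fun p _ => ⟨p⟩

theorem IsLocatingRVColoring.color_ne_of_twins (hc : IsLocatingRVColoring G c)
    {x y : V} (hxy : G.Adj x y) (htwin : ∀ z, z ≠ x → z ≠ y → (G.Adj z x ↔ G.Adj z y)) :
    c x ≠ c y := by
  classical
  intro hcxy
  have hφ : ∀ z, c (Iso.swapOfTwins hxy htwin z) = c z := fun z => by
    rw [Iso.swapOfTwins_apply, Equiv.swap_apply_def]
    split_ifs <;> simp_all
  have hyx : y = x := hc.2 (by simpa [Iso.swapOfTwins_apply] using rainbowCode_iso _ hφ x)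
  exact hxy.ne hyx.symm

theorem rvc_le (hc : IsRVColoring G c) : rvc G ≤ k :=
  Nat.sInf_le ⟨c, hc⟩

theorem rvcl_le (hc : IsLocatingRVColoring G c) : rvcl G ≤ k :=
  Nat.sInf_le ⟨c, hc⟩

theorem exists_isLocatingRVColoring_rvcl (hc : IsLocatingRVColoring G c) :
    ∃ c' : V → Fin (rvcl G), IsLocatingRVColoring G c' :=
  Nat.sInf_mem (s := {k | ∃ c : V → Fin k, IsLocatingRVColoring G c}) ⟨k, c, hc⟩

end RainbowCode

namespace edgeCorona

variable {V W : Type*} {G : SimpleGraph V} {H : SimpleGraph W} {k : ℕ}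
  {c : V ⊕ (G.edgeSet × W) → Fin k}

@[simp] theorem adj_inl_inr {a : V} {e : G.edgeSet} {w : W} :
    (edgeCorona G H).Adj (.inl a) (.inr (e, w)) ↔ a ∈ (e : Sym2 V) :=
  Iff.rfl

@[simp] theorem adj_inr_inl {a : V} {e : G.edgeSet} {w : W} :
    (edgeCorona G H).Adj (.inr (e, w)) (.inl a) ↔ a ∈ (e : Sym2 V) :=
  Iff.rfl

@[simp] theorem adj_inr_inr {e e' : G.edgeSet} {w w' : W} :
    (edgeCorona G H).Adj (.inr (e, w)) (.inr (e', w')) ↔ e = e' ∧ H.Adj w w' :=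
  Iff.rfl

theorem exists_walk_support_map_sublist {u v : V} (p : (edgeCorona G H).Walk (.inl u) (.inl v)) :
    ∃ q : G.Walk u v, (q.support.map Sum.inl).Sublist p.support := by
  suffices key : ∀ {x y} (p : (edgeCorona G H).Walk x y), y = .inl v →
      (∀ u, x = .inl u → ∃ q : G.Walk u v, (q.support.map Sum.inl).Sublist p.support) ∧
      (∀ e w, x = .inr (e, w) →
        ∃ a ∈ (e : Sym2 V), ∃ q : G.Walk a v, (q.support.map Sum.inl).Sublist p.support) from
    (key p rfl).1 u rfl
  intro x y p
  induction p with
  | nil =>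
    rintro rfl
    exact ⟨by rintro u ⟨⟩; exact ⟨.nil, by simp⟩, by rintro e w ⟨⟩⟩
  | @cons x b y h p ih =>
    intro hy
    obtain ⟨ih_inl, ih_inr⟩ := ih hy
    refine ⟨?_, ?_⟩
    · rintro u rfl
      rcases b with u' | ⟨e, w⟩
      · obtain ⟨q, hq⟩ := ih_inl u' rfl
        exact ⟨.cons h q, hq.cons_cons _⟩
      · obtain ⟨a, ha, q, hq⟩ := ih_inr e w rfl
        by_cases hau : a = u
        · subst hau
          exact ⟨q, hq.cons _⟩
        · have hadj : G.Adj u a := by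
            rw [← mem_edgeSet, ← (Sym2.mem_and_mem_iff (Ne.symm hau)).mp ⟨h, ha⟩]
            exact e.2
          exact ⟨.cons hadj q, hq.cons_cons _⟩
    · rintro e w rfl
      rcases b with u' | ⟨e', w'⟩
      · obtain ⟨q, hq⟩ := ih_inl u' rfl
        exact ⟨u', h, q, hq.cons _⟩
      · obtain ⟨a, ha, q, hq⟩ := ih_inr e' w' rfl
        exact ⟨a, h.1 ▸ ha, q, hq.cons _⟩

theorem _root_.IsRVColoring.of_edgeCorona {c : V ⊕ (G.edgeSet × W) → Fin k}
    (hc : IsRVColoring (edgeCorona G H) c) : IsRVColoring G (c ∘ Sum.inl) := by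
  intro u v
  obtain ⟨p, hp, hcol⟩ := hc (.inl u) (.inl v)
  obtain ⟨q, hq⟩ := exists_walk_support_map_sublist p
  refine ⟨q, (Walk.isPath_def _).mpr ((hq.nodup hp.support_nodup).of_map _), ?_⟩
  simpa [List.map_tail] using (hq.tail.dropLast.map c).nodup hcol

theorem _root_.IsLocatingRVColoring.injective_edgeCorona_copy
    (hc : IsLocatingRVColoring (edgeCorona G ⊤) c) (e : G.edgeSet) :
    Function.Injective fun w : W => c (.inr (e, w)) := by
  intro w₁ w₂ hw
  by_contra hne
  refine hc.color_ne_of_twins (x := .inr (e, w₁)) (y := .inr (e, w₂)) (by simpa using hne) ?_ hw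
  rintro (u | ⟨e', w'⟩) h₁ h₂
  · exact Iff.rfl
  · simp only [adj_inr_inr, top_adj]
    grind

theorem _root_.IsLocatingRVColoring.card_add_one_le_of_edgeCorona [Fintype W]
    (hc : IsLocatingRVColoring (edgeCorona G ⊤) c) (e : G.edgeSet) :
    Fintype.card W + 1 ≤ k := by
  have hinj := hc.injective_edgeCorona_copy e
  refine lt_of_le_of_ne (by simpa using Fintype.card_le_of_injective _ hinj) fun hk => ?_
  have hsurj := ((Fintype.bijective_iff_injective_and_card _).mpr ⟨hinj, by simp [hk]⟩).2
  set u := (e : Sym2 V).out.1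
  obtain ⟨w, hw⟩ := hsurj (c (.inl u))
  refine Sum.inl_ne_inr (hc.2 (rainbowCode_eq_of_forall_exists_adj hc.1.preconnected hw.symm ?_))
  intro i hi
  obtain ⟨w', rfl⟩ := hsurj i
  refine ⟨.inr (e, w'), rfl, Sym2.out_fst_mem _, rfl, ?_⟩
  rintro rfl
  exact hi hw

-- Reducible, so that `inlHom G H a` and `Sum.inl a` agree in the endpoints of mapped walks.
abbrev inlHom (G : SimpleGraph V) (H : SimpleGraph W) : G →g edgeCorona G H :=
  ⟨Sum.inl, id⟩

@[simp] theorem coe_inlHom : ⇑(inlHom G H) = Sum.inl :=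
  rfl

def walkToCopy {a b : V} (q : G.Walk a b) {e : G.edgeSet} (w : W) (hb : b ∈ (e : Sym2 V)) :
    (edgeCorona G H).Walk (.inl a) (.inr (e, w)) :=
  (q.map (inlHom G H)).concat (show (edgeCorona G H).Adj (inlHom G H b) (.inr (e, w)) from hb)

theorem support_walkToCopy {a b : V} (q : G.Walk a b) {e : G.edgeSet} (w : W)
    (hb : b ∈ (e : Sym2 V)) :
    (walkToCopy (H := H) q w hb).support = q.support.map Sum.inl ++ [.inr (e, w)] := by
  simp [walkToCopy, Walk.support_concat]

theorem isPath_walkToCopy {a b : V} {q : G.Walk a b} (hq : q.IsPath) {e : G.edgeSet} (w : W)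
    (hb : b ∈ (e : Sym2 V)) : (walkToCopy (H := H) q w hb).IsPath :=
  (hq.map Sum.inl_injective).concat (by simp) _

theorem isRainbowPath_of_sublist (hinj : Function.Injective (c ∘ Sum.inl))
    {x y : V ⊕ (G.edgeSet × W)} {p : (edgeCorona G H).Walk x y} (hp : p.IsPath) {a b : V}
    {q : G.Walk a b} (hq : q.IsPath)
    (hsub : p.support.tail.dropLast.Sublist (q.support.map Sum.inl)) :
    IsRainbowPath _ c p :=
  ⟨hp, (hsub.map c).nodup (by simpa using hq.support_nodup.map hinj)⟩

theorem isRVColoring (hG : G.Connected) (hinj : Function.Injective (c ∘ Sum.inl)) :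
    IsRVColoring (edgeCorona G H) c := by
  have hpath := hG.preconnected.exists_isPath
  have hcopy : ∀ u e w,
      ∃ p : (edgeCorona G H).Walk (.inl u) (.inr (e, w)), IsRainbowPath _ c p := by
    intro u e w
    obtain ⟨q, hq⟩ := hpath u (e : Sym2 V).out.1
    refine ⟨_, isRainbowPath_of_sublist hinj
      (isPath_walkToCopy hq w (Sym2.out_fst_mem _)) hq ?_⟩
    simpa [support_walkToCopy] using List.tail_sublist (q.support.map Sum.inl)
  rintro (u | ⟨e, w⟩) (v | ⟨e', w'⟩)
  · obtain ⟨q, hq⟩ := hpath u v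
    refine ⟨q.map (inlHom G H), isRainbowPath_of_sublist hinj (hq.map Sum.inl_injective) hq ?_⟩
    simpa using (List.dropLast_sublist _).trans (List.tail_sublist (q.support.map Sum.inl))
  · exact hcopy u e' w'
  · obtain ⟨p, hp⟩ := hcopy v e w
    exact ⟨_, hp.reverse⟩
  · by_cases hne : (e, w) = (e', w')
    · rw [← hne]
      exact ⟨.nil, .nil, by simp⟩
    obtain ⟨q, hq⟩ := hpath (e : Sym2 V).out.1 (e' : Sym2 V).out.1
    refine ⟨.cons (adj_inr_inl (w := w).mpr (Sym2.out_fst_mem _))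
      (walkToCopy q w' (Sym2.out_fst_mem _)), isRainbowPath_of_sublist hinj ?_ hq ?_⟩
    · refine (isPath_walkToCopy hq w' _).cons ?_
      simpa [support_walkToCopy] using hne
    · simp [support_walkToCopy]

section LocatingColoring

variable [DecidableEq W]

def locatingColoring (w₀ : W) : V ⊕ (G.edgeSet × W) → V ⊕ G.edgeSet ⊕ {w // w ≠ w₀}
  | .inl u => .inl u
  | .inr (e, w) => if h : w = w₀ then .inr (.inl e) else .inr (.inr ⟨w, h⟩)

theorem locatingColoring_eq_inr_inl_iff {w₀ : W} {e : G.edgeSet} {x : V ⊕ (G.edgeSet × W)} :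
    locatingColoring w₀ x = .inr (.inl e) ↔ x = .inr (e, w₀) := by
  rcases x with u | ⟨e', w⟩
  · simp [locatingColoring]
  · by_cases hw : w = w₀ <;> simp [locatingColoring, hw]

variable [Fintype V] [DecidableEq V] [DecidableRel G.Adj] [Fintype W]

theorem isLocatingRVColoring_locatingColoring (hG : G.Connected) {w₀ : W}
    (hw₀ : ∀ w, w ≠ w₀ → H.Adj w w₀) :
    IsLocatingRVColoring (edgeCorona G H) (Fintype.equivFin _ ∘ locatingColoring w₀) := by
  set c := Fintype.equivFin _ ∘ locatingColoring (G := G) w₀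
  have hRV : IsRVColoring (edgeCorona G H) c :=
    isRVColoring hG ((Fintype.equivFin _).injective.comp Sum.inl_injective)
  refine ⟨hRV, fun x y hxy => ?_⟩
  have hcol : locatingColoring w₀ x = locatingColoring w₀ y :=
    (Fintype.equivFin _).injective (color_eq_of_rainbowCode_eq hRV.preconnected hxy)
  rcases x with u | ⟨e, w⟩ <;> rcases y with v | ⟨e', w'⟩
  · simpa [locatingColoring] using hcol
  · by_cases hw' : w' = w₀ <;> simp [locatingColoring, hw'] at hcol
  · by_cases hw : w = w₀ <;> simp [locatingColoring, hw] at hcol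
  by_cases hw : w = w₀ <;> by_cases hw' : w' = w₀ <;>
    simp only [locatingColoring, hw, hw', dite_true, dite_false, reduceCtorEq, Sum.inr.injEq,
      Sum.inl.injEq, Subtype.mk.injEq] at hcol
  · rw [hcol, hw, hw']
  obtain rfl := hcol
  by_cases he : e = e'
  · rw [he]
  exfalso
  have hz : ∀ t, c t = c (.inr (e, w₀)) ↔ t = .inr (e, w₀) := fun t => by
    have h₀ : locatingColoring (G := G) w₀ (.inr (e, w₀)) = .inr (.inl e) := by
      simp [locatingColoring]
    simp only [c, Function.comp_apply, EmbeddingLike.apply_eq_iff_eq, h₀,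
      locatingColoring_eq_inr_inl_iff]
  have hcode : rainbowCode (edgeCorona G H) c (.inr (e, w)) (c (.inr (e, w₀))) = 1 := by
    have hadj : (edgeCorona G H).Adj (.inr (e, w)) (.inr (e, w₀)) :=
      adj_inr_inr.mpr ⟨rfl, hw₀ w hw⟩
    refine le_antisymm ((rainbowCode_le_dist rfl _).trans (dist_eq_one_iff_adj.mpr hadj).le)
      (Nat.one_le_iff_ne_zero.mpr ?_)
    rw [Ne, rainbowCode_eq_zero_iff hRV.preconnected ⟨_, rfl⟩, hz]
    simpa using hw
  obtain ⟨t, ht, hdist⟩ :=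
    exists_dist_eq_rainbowCode (G := edgeCorona G H) ⟨_, rfl⟩ (.inr (e', w))
  rw [(hz t).mp ht, ← hxy, hcode, dist_eq_one_iff_adj] at hdist
  exact he hdist.1.symm

end LocatingColoring

end edgeCorona

theorem stmt6 {V : Type*} [Fintype V] [DecidableEq V] (G : SimpleGraph V)
    [DecidableRel G.Adj] (n : ℕ)
    (hG : G.Connected) (hm : 2 ≤ Fintype.card V) (hn : 2 ≤ n) :
    max (rvc G) (n + 1) ≤ rvcl (edgeCorona G (⊤ : SimpleGraph (Fin n))) ∧
      rvcl (edgeCorona G (⊤ : SimpleGraph (Fin n))) ≤ Fintype.card V + n + G.edgeFinset.card - 1 := by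
  have : Nontrivial V := Fintype.one_lt_card_iff_nontrivial.mp hm
  obtain ⟨u, v, huv⟩ : ∃ u v, G.Adj u v :=
    ⟨_, hG.preconnected.exists_adj_of_nontrivial (Classical.arbitrary V)⟩
  have hc := edgeCorona.isLocatingRVColoring_locatingColoring (H := ⊤) hG
    (w₀ := (⟨0, by omega⟩ : Fin n)) fun w hw => (top_adj w _).mpr hw
  obtain ⟨c, hc'⟩ := exists_isLocatingRVColoring_rvcl hc
  refine ⟨max_le (rvc_le hc'.1.of_edgeCorona) ?_, ?_⟩
  · simpa using hc'.card_add_one_le_of_edgeCorona ⟨s(u, v), huv⟩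
  · simpa only [Fintype.card_sum_sum_subtype_ne, Fintype.card_fin, ← edgeFinset_card]
      using rvcl_le hc
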